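/- The regulated Petri net A ⊙ N is weakly reversible if and only if N is weakly reversible. -/

import Mathlib

/-
The map `c ↦ c + q_c` from complexes of `N` to markings of `A ⊙ N` is injective and sends the
input and output bags of every transition of `N` to those of the same transition of `A ⊙ N`.
It is therefore an isomorphism of reaction graphs, and weak reversibility is a property of the
reaction graph alone.
-/

/-- Input bag of a transition. -/
def preBag {P T : Type*} (Wm : P → T → ℕ) (t : T) : P → ℕ := fun p => Wm p t

/-- Output bag of a transition. -/
def postBag {P T : Type*} (Wp : P → T → ℕ) (t : T) : P → ℕ := fun p => Wp p t

/-- The finite set of complexes of the net. -/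
def complexes {P T : Type*} [Fintype P] [Fintype T] [DecidableEq P]
    (Wm Wp : P → T → ℕ) : Finset (P → ℕ) :=
  (Finset.univ.image (preBag Wm)) ∪ (Finset.univ.image (postBag Wp))

variable {P T : Type*} [Fintype P] [Fintype T] [DecidableEq P] [DecidableEq T]

/-- Pre-matrix of the regulated net `A ⊙ N`: the places of `N` together with
one new place per complex of `N` (the reaction Petri net is stacked on `N`). -/
def rWm (Wm Wp : P → T → ℕ) : (P ⊕ {c // c ∈ complexes Wm Wp}) → T → ℕ
  | Sum.inl p, t => Wm p t
  | Sum.inr c, t => if c.1 = preBag Wm t then 1 else 0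

/-- Post-matrix of the regulated net `A ⊙ N`. -/
def rWp (Wm Wp : P → T → ℕ) : (P ⊕ {c // c ∈ complexes Wm Wp}) → T → ℕ
  | Sum.inl p, t => Wp p t
  | Sum.inr c, t => if c.1 = postBag Wp t then 1 else 0

/-- `c` is a complex of the net. -/
def isComplex {P' T' : Type*} (Wm Wp : P' → T' → ℕ) (c : P' → ℕ) : Prop :=
  (∃ t, c = preBag Wm t) ∨ (∃ t, c = postBag Wp t)

/-- Arc of the reaction graph. -/
def rarc {P' T' : Type*} (Wm Wp : P' → T' → ℕ) (c c' : P' → ℕ) : Prop :=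
  ∃ t, c = preBag Wm t ∧ c' = postBag Wp t

/-- Weak reversibility: every connected component of the reaction graph is
strongly connected. -/
def weaklyReversible {P' T' : Type*} (Wm Wp : P' → T' → ℕ) : Prop :=
  ∀ c c', isComplex Wm Wp c → isComplex Wm Wp c' →
    Relation.ReflTransGen (fun a b => rarc Wm Wp a b ∨ rarc Wm Wp b a) c c' →
    Relation.ReflTransGen (rarc Wm Wp) c c'

namespace Relation

variable {α β : Type*} {r : α → α → Prop} {f : α → β}

lemma symmGen_map : SymmGen (Relation.Map r f f) = Relation.Map (SymmGen r) f f := by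
  ext a b
  grind [SymmGen, Relation.Map]

lemma ReflTransGen.map {a b : α} (h : ReflTransGen r a b) :
    ReflTransGen (Relation.Map r f f) (f a) (f b) :=
  h.lift f fun _ _ hab => ⟨_, _, hab, rfl, rfl⟩

lemma ReflTransGen.exists_of_map (hf : f.Injective) {a : α} {b : β}
    (h : ReflTransGen (Relation.Map r f f) (f a) b) : ∃ a', f a' = b ∧ ReflTransGen r a a' := by
  induction h with
  | refl => exact ⟨a, rfl, .refl⟩
  | tail _ hstep ih =>
    obtain ⟨a', rfl, ha'⟩ := ih
    obtain ⟨u, v, huv, hu, rfl⟩ := hstep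
    exact ⟨v, rfl, ha'.tail (hf hu ▸ huv)⟩

lemma reflTransGen_map_iff (hf : f.Injective) {a b : α} :
    ReflTransGen (Relation.Map r f f) (f a) (f b) ↔ ReflTransGen r a b := by
  refine ⟨fun h => ?_, ReflTransGen.map⟩
  obtain ⟨b', hb', h⟩ := h.exists_of_map hf
  exact hf hb' ▸ h

end Relation

open Relation

section BagMap

variable {P P' T : Type*} {Wm Wp : P → T → ℕ} {Wm' Wp' : P' → T → ℕ} {f : (P → ℕ) → (P' → ℕ)}

lemma rarc_eq_map (hpre : ∀ t, preBag Wm' t = f (preBag Wm t))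
    (hpost : ∀ t, postBag Wp' t = f (postBag Wp t)) :
    rarc Wm' Wp' = Relation.Map (rarc Wm Wp) f f := by
  ext a b
  constructor
  · rintro ⟨t, rfl, rfl⟩
    exact ⟨_, _, ⟨t, rfl, rfl⟩, (hpre t).symm, (hpost t).symm⟩
  · rintro ⟨_, _, ⟨t, rfl, rfl⟩, rfl, rfl⟩
    exact ⟨t, (hpre t).symm, (hpost t).symm⟩

lemma isComplex_iff_exists (hpre : ∀ t, preBag Wm' t = f (preBag Wm t))
    (hpost : ∀ t, postBag Wp' t = f (postBag Wp t)) {a : P' → ℕ} :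
    isComplex Wm' Wp' a ↔ ∃ c, isComplex Wm Wp c ∧ f c = a := by
  constructor
  · rintro (⟨t, rfl⟩ | ⟨t, rfl⟩)
    · exact ⟨_, .inl ⟨t, rfl⟩, (hpre t).symm⟩
    · exact ⟨_, .inr ⟨t, rfl⟩, (hpost t).symm⟩
  · rintro ⟨c, ⟨t, rfl⟩ | ⟨t, rfl⟩, rfl⟩
    · exact .inl ⟨t, (hpre t).symm⟩
    · exact .inr ⟨t, (hpost t).symm⟩

theorem weaklyReversible_iff_of_injective (hf : f.Injective)
    (hpre : ∀ t, preBag Wm' t = f (preBag Wm t)) (hpost : ∀ t, postBag Wp' t = f (postBag Wp t)) :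
    weaklyReversible Wm' Wp' ↔ weaklyReversible Wm Wp := by
  have hcomplex := fun a => isComplex_iff_exists (a := a) hpre hpost
  change (∀ a a', _ → _ → ReflTransGen (SymmGen _) a a' → _) ↔
    ∀ c c', _ → _ → ReflTransGen (SymmGen _) c c' → _
  rw [rarc_eq_map hpre hpost, symmGen_map]
  constructor
  · intro h c c' hc hc' hpath
    rw [← reflTransGen_map_iff hf]
    exact h _ _ ((hcomplex _).2 ⟨c, hc, rfl⟩) ((hcomplex _).2 ⟨c', hc', rfl⟩) hpath.map
  · intro h a a' ha ha'
    obtain ⟨c, hc, rfl⟩ := (hcomplex a).1 ha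
    obtain ⟨c', hc', rfl⟩ := (hcomplex a').1 ha'
    rw [reflTransGen_map_iff hf, reflTransGen_map_iff hf]
    exact h c c' hc hc'

end BagMap

section Regulated

variable {P T : Type*} [Fintype P] [Fintype T] [DecidableEq P] (Wm Wp : P → T → ℕ)

/-- The marking `c + q_c` of `A ⊙ N`, where `q_c` is the place of `A` attached to the complex `c`. -/
def liftComplex (c : P → ℕ) : P ⊕ {c // c ∈ complexes Wm Wp} → ℕ :=
  Sum.elim c fun q => if q.1 = c then 1 else 0

lemma liftComplex_injective : (liftComplex Wm Wp).Injective :=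
  fun _ _ h => funext fun p => congrFun h (.inl p)

lemma preBag_rWm (t : T) : preBag (rWm Wm Wp) t = liftComplex Wm Wp (preBag Wm t) := by
  funext x
  cases x <;> rfl

lemma postBag_rWp (t : T) : postBag (rWp Wm Wp) t = liftComplex Wm Wp (postBag Wp t) := by
  funext x
  cases x <;> rfl

end Regulated

/-- The regulated Petri net `A ⊙ N` is weakly reversible iff `N` is. -/
theorem stmt10 (Wm Wp : P → T → ℕ) :
    weaklyReversible (rWm Wm Wp) (rWp Wm Wp) ↔ weaklyReversible Wm Wp :=
  weaklyReversible_iff_of_injective (liftComplex_injective Wm Wp) (preBag_rWm Wm Wp)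
    (postBag_rWp Wm Wp)
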